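/- Let B be a diagonal n×n matrix with purely imaginary (or zero) diagonal entries, acting on polynomial maps f : ℂ^n × ℝ^s → ℂ^n homogeneous of degree ℓ via the homological operator (L_B f)(x,μ) = D_x f(x,μ) B x - B f(x,μ). If f is in the range of L_B, i.e. f = L_B g for some homogeneous g, then the time average lim_{T→∞} (1/T) ∫₀^T e^{Bs} f(e^{-Bs}x, μ) ds equals 0 for every (x, μ). -/

import Mathlib

/-!
Extend time to a complex variable and put `H z = e^{Bz} g(e^{-Bz} x)`. Differentiating the
product gives `H' z = -e^{Bz} (L_B g)(e^{-Bz} x)`, so the integral of `e^{Bs} f(e^{-Bs} x)` over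
`[0, T]` telescopes to `H 0 - H T`. For real `t` the matrix `e^{Bt}` is unitary, so `H` is bounded
on `ℝ` by the maximum of `‖g‖` on the sphere of radius `‖x‖`, and the average tends to `0`.
As `H` is holomorphic, `H'` is continuous, which supplies the integrability needed for the
fundamental theorem of calculus.
-/

open Filter Topology Complex

theorem tendsto_average_of_hasDerivAt_of_bounded {E : Type*} [NormedAddCommGroup E]
    [NormedSpace ℝ E] [CompleteSpace E] {G G' : ℝ → E} (hG : ∀ t, HasDerivAt G (G' t) t)
    (hG' : ∀ T, IntervalIntegrable G' MeasureTheory.volume 0 T) {C : ℝ} (hC : ∀ t, ‖G t‖ ≤ C) :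
    Tendsto (fun T : ℝ => (1 / T) • ∫ t in (0 : ℝ)..T, G' t) atTop (𝓝 0) := by
  have hFTC : ∀ T, ∫ t in (0 : ℝ)..T, G' t = G T - G 0 := fun T =>
    intervalIntegral.integral_eq_sub_of_hasDerivAt (fun t _ => hG t) (hG' T)
  simp_rw [hFTC, one_div]
  exact tendsto_inv_atTop_zero.zero_smul_isBoundedUnder_le
    (isBoundedUnder_of ⟨C + C, fun T => (norm_sub_le _ _).trans (add_le_add (hC T) (hC 0))⟩)

theorem tendsto_average_of_hasDerivAt_complex_of_bounded {E : Type*} [NormedAddCommGroup E]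
    [NormedSpace ℂ E] [CompleteSpace E] {H H' : ℂ → E} (hH : ∀ z, HasDerivAt H (H' z) z)
    {C : ℝ} (hC : ∀ t : ℝ, ‖H t‖ ≤ C) :
    Tendsto (fun T : ℝ => (1 / T) • ∫ t in (0 : ℝ)..T, H' t) atTop (𝓝 0) := by
  have hH' : H' = deriv H := funext fun z => (hH z).deriv.symm
  have hdiff : Differentiable ℂ H := fun z => (hH z).differentiableAt
  have hcont : Continuous fun t : ℝ => H' t := by
    rw [hH']
    exact hdiff.deriv.continuous.comp continuous_ofReal
  have hreal : ∀ t : ℝ, HasDerivAt (fun t : ℝ => H t) (H' t) t := fun t => by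
    simpa [Function.comp_def] using (hH t).scomp t ofRealCLM.hasDerivAt
  exact tendsto_average_of_hasDerivAt_of_bounded hreal
    (fun _ => hcont.intervalIntegrable _ _) hC

theorem norm_exp_mul_ofReal_of_re_eq_zero {c : ℂ} (hc : c.re = 0) (t : ℝ) :
    ‖exp (c * t)‖ = 1 := by
  simp [norm_exp, hc]

section DiagonalFlow

variable {n : ℕ}

/-- `e^{Bz}` for the diagonal matrix with diagonal `B`. -/
noncomputable def diagExp (B : Fin n → ℂ) (z : ℂ) (v : Fin n → ℂ) : Fin n → ℂ :=
  fun j => exp (B j * z) * v j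

noncomputable def homologicalOp (B : Fin n → ℂ) (g : (Fin n → ℂ) → Fin n → ℂ)
    (v : Fin n → ℂ) : Fin n → ℂ :=
  fderiv ℂ g v (fun j => B j * v j) - fun i => B i * g v i

theorem norm_diagExp_ofReal {B : Fin n → ℂ} (hB : ∀ i, (B i).re = 0) (t : ℝ)
    (v : Fin n → ℂ) : ‖diagExp B t v‖ = ‖v‖ := by
  have hcoord : (fun j => ‖diagExp B t v j‖₊) = fun j => ‖v j‖₊ := funext fun j => by
    ext
    simp [diagExp, norm_exp_mul_ofReal_of_re_eq_zero (hB j)]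
  simp only [Pi.norm_def, hcoord]

theorem hasDerivAt_diagExp (B : Fin n → ℂ) (v : Fin n → ℂ) (z : ℂ) :
    HasDerivAt (fun z => diagExp B z v) (fun j => B j * diagExp B z v j) z := by
  refine hasDerivAt_pi.mpr fun j => ?_
  have h := (((hasDerivAt_id z).const_mul (B j)).cexp).mul_const (v j)
  exact h.congr_deriv (by simp only [diagExp, id, mul_one]; ring)

theorem hasDerivAt_diagExp_comp_diagExp_neg (B : Fin n → ℂ) {g : (Fin n → ℂ) → Fin n → ℂ}
    (hg : Differentiable ℂ g) (x : Fin n → ℂ) (z : ℂ) :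
    HasDerivAt (fun z => diagExp B z (g (diagExp (-B) z x)))
      (-diagExp B z (homologicalOp B g (diagExp (-B) z x))) z := by
  set y := diagExp (-B) z x
  have hy : HasDerivAt (fun z => diagExp (-B) z x) (-fun j => B j * y j) z :=
    (hasDerivAt_diagExp (-B) x z).congr_deriv (by ext j; simp [y])
  have hgy := (hg y).hasFDerivAt.comp_hasDerivAt z hy
  refine hasDerivAt_pi.mpr fun i => ?_
  have h := (((hasDerivAt_id z).const_mul (B i)).cexp).mul (hasDerivAt_pi.mp hgy i)
  refine h.congr_deriv ?_
  simp only [diagExp, homologicalOp, Function.comp_apply, map_neg, Pi.neg_apply, Pi.sub_apply,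
    mul_one, id]
  ring

end DiagonalFlow

theorem stmt13_general (n s : ℕ) (B : Fin n → ℂ) (hB : ∀ i, (B i).re = 0)
    (g f : (Fin n → ℂ) → (Fin s → ℝ) → (Fin n → ℂ))
    (hgdiff : ∀ μ, Differentiable ℂ fun x => g x μ)
    (hf : ∀ x μ, f x μ
      = fderiv ℂ (fun x => g x μ) x (fun j => B j * x j) - fun i => B i * g x μ i)
    (x : Fin n → ℂ) (μ : Fin s → ℝ) :
    Filter.Tendsto (fun T : ℝ => (1 / T) •
        ∫ t in (0:ℝ)..T, fun i =>
          Complex.exp (B i * t) * f (fun j => Complex.exp (-B j * t) * x j) μ i)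
      Filter.atTop (nhds 0) := by
  obtain ⟨C, hC⟩ := (isCompact_sphere (0 : Fin n → ℂ) ‖x‖).exists_bound_of_continuousOn
    (hgdiff μ).continuous.continuousOn
  have hbound : ∀ t : ℝ, ‖-diagExp B t (g (diagExp (-B) t x) μ)‖ ≤ C := fun t => by
    rw [norm_neg, norm_diagExp_ofReal hB]
    exact hC _ (mem_sphere_zero_iff_norm.mpr (norm_diagExp_ofReal (by simpa using hB) t x))
  have hderiv : ∀ z : ℂ, HasDerivAt (fun z => -diagExp B z (g (diagExp (-B) z x) μ))
      (diagExp B z (f (diagExp (-B) z x) μ)) z := fun z => by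
    have h := (hasDerivAt_diagExp_comp_diagExp_neg B (hgdiff μ) x z).neg
    rwa [neg_neg, homologicalOp, ← hf] at h
  -- elaborated without expected type: unifying with the goal's `Pi` instances first is very slow
  exact (tendsto_average_of_hasDerivAt_complex_of_bounded hderiv hbound :)

/-- Let `B` be diagonal with purely imaginary (or zero) entries `B i`, acting on
homogeneous maps via the homological operator
`(L_B g)(x,μ) = D_x g(x,μ) Bx - B g(x,μ)`.  If `f = L_B g` for a homogeneous `g` of
degree `ℓ`, then the time average `lim_{T→∞} (1/T) ∫₀^T e^{Bs} f(e^{-Bs}x, μ) ds`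
is `0` for every `(x,μ)`. -/
theorem stmt13 (n s ℓ : ℕ) (B : Fin n → ℂ) (hB : ∀ i, (B i).re = 0)
    (g f : (Fin n → ℂ) → (Fin s → ℝ) → (Fin n → ℂ))
    (hgdiff : ∀ μ, Differentiable ℂ fun x => g x μ)
    (hghom : ∀ (c : ℂ) (x : Fin n → ℂ) (μ : Fin s → ℝ), g (c • x) μ = c ^ ℓ • g x μ)
    (hf : ∀ x μ, f x μ
      = fderiv ℂ (fun x => g x μ) x (fun j => B j * x j) - fun i => B i * g x μ i)
    (x : Fin n → ℂ) (μ : Fin s → ℝ) :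
    Filter.Tendsto (fun T : ℝ => (1 / T) •
        ∫ t in (0:ℝ)..T, fun i =>
          Complex.exp (B i * t) * f (fun j => Complex.exp (-B j * t) * x j) μ i)
      Filter.atTop (nhds 0) :=
  stmt13_general n s B hB g f hgdiff hf x μ
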